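/- Let the activation satisfy |σ(x)| ≤ |x| for all x, and suppose ‖Z_L − Y‖_F ≤ ε1 with ε1 < s_K(Y), ‖X‖_op > 0, and s_K(W_{L:L1+1}) > 0. Then the parameter norm of the nonlinear part satisfies Σ_{ℓ=1}^{L1} ‖W_ℓ‖_F² ≥ L1 · ((s_K(Y) − ε1)/(s_K(W_{L:L1+1})·‖X‖_op))^{2/L1}. -/

import Mathlib

/-! The output of the network factors as `Z_L = G_{L₁} Z_{L₁}`. Testing `Y` against a unit
vector `u` with `‖uᵀ G_{L₁}‖ = s_K(G_{L₁})` gives the Weyl-type bound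
`s_K(Y) - ε₁ ≤ ‖uᵀ Z_L‖ ≤ s_K(G_{L₁}) ‖Z_{L₁}‖_F`, while `|σ x| ≤ |x|` and submultiplicativity give
`‖Z_{L₁}‖_F ≤ (∏ ‖W_ℓ‖_F) ‖X‖_op`; AM–GM on the `‖W_ℓ‖_F²` turns the product into the sum.

The spectral input is that the `K`-th singular value of a `K × n` matrix `A` with `K ≤ n` is the
square root of the least eigenvalue of `A Aᵀ`, because the characteristic polynomials satisfy
`χ_{AᵀA} = X ^ (n - K) χ_{AAᵀ}`; both the Rayleigh bound and the minimising eigenvector of `A Aᵀ`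
then transfer to `s_K(A)`. -/

open Matrix Finset Real

/-- Frobenius norm of a real matrix. -/
noncomputable def frobNorm {m n : ℕ} (A : Matrix (Fin m) (Fin n) ℝ) : ℝ :=
  Real.sqrt (∑ i, ∑ j, (A i j) ^ 2)

/-- Operator (spectral) norm of a real matrix. -/
noncomputable def opNorm {m n : ℕ} (A : Matrix (Fin m) (Fin n) ℝ) : ℝ :=
  sSup {x : ℝ | ∃ v : Fin n → ℝ, (∑ i, v i ^ 2) ≤ 1 ∧ x = Real.sqrt (∑ i, (A.mulVec v i) ^ 2)}

theorem Matrix.isHermitian_transpose_mul_self {m n : Type*} [Fintype m]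
    (A : Matrix m n ℝ) : (Aᵀ * A).IsHermitian := by
  rw [← Matrix.conjTranspose_eq_transpose_of_trivial]
  exact Matrix.isHermitian_conjTranspose_mul_self A

/-- The singular values of a real matrix, in non-increasing order (indexed by columns). -/
noncomputable def svals {m n : ℕ} (A : Matrix (Fin m) (Fin n) ℝ) : Fin n → ℝ := fun i =>
  Real.sqrt ((Matrix.isHermitian_transpose_mul_self A).eigenvalues
    (Tuple.sort ((Matrix.isHermitian_transpose_mul_self A).eigenvalues) i.rev))

/-- `sval A k` is the `k`-th largest singular value of `A` (1-indexed). -/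
noncomputable def sval {m n : ℕ} (A : Matrix (Fin m) (Fin n) ℝ) (k : ℕ) : ℝ :=
  if h : k - 1 < n then svals A ⟨k - 1, h⟩ else 0

/-- Smallest singular value of a (possibly rectangular) matrix. -/
noncomputable def smin {m n : ℕ} (A : Matrix (Fin m) (Fin n) ℝ) : ℝ :=
  sval A (min m n)

/-- Condition number: the ratio between the largest and the smallest *nonzero*
singular values, i.e. the supremum of ratios of nonzero singular values. -/
noncomputable def kappa {m n : ℕ} (A : Matrix (Fin m) (Fin n) ℝ) : ℝ :=
  sSup {x : ℝ | ∃ i j : Fin n, svals A i ≠ 0 ∧ svals A j ≠ 0 ∧ x = svals A i / svals A j}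

theorem norm_toLp_eq_sqrt {ι : Type*} [Fintype ι] (v : ι → ℝ) :
    ‖WithLp.toLp 2 v‖ = √(∑ i, v i ^ 2) := by
  simp [EuclideanSpace.norm_eq]

theorem norm_toLp_sq {ι : Type*} [Fintype ι] (v : ι → ℝ) : ‖WithLp.toLp 2 v‖ ^ 2 = v ⬝ᵥ v := by
  rw [EuclideanSpace.real_norm_sq_eq]
  simp [dotProduct, sq]

section L2OpNorm

open scoped Matrix.Norms.L2Operator

variable {m n : ℕ}

theorem opNorm_eq_norm (A : Matrix (Fin m) (Fin n) ℝ) : opNorm A = ‖A‖ := by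
  rw [l2_opNorm_def, ← ContinuousLinearMap.sSup_unitClosedBall_eq_norm, opNorm]
  congr 1
  ext x
  simp only [Set.mem_ofPred_eq, Set.mem_image, Metric.mem_closedBall, dist_zero_right]
  constructor
  · rintro ⟨v, hv, rfl⟩
    refine ⟨WithLp.toLp 2 v, ?_, ?_⟩
    · rw [norm_toLp_eq_sqrt]; exact Real.sqrt_le_one.mpr hv
    · simp [norm_toLp_eq_sqrt]
  · rintro ⟨v, hv, rfl⟩
    refine ⟨v.ofLp, ?_, ?_⟩
    · rwa [← Real.sqrt_le_one, ← norm_toLp_eq_sqrt]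
    · rw [← norm_toLp_eq_sqrt]; rfl

theorem opNorm_nonneg (A : Matrix (Fin m) (Fin n) ℝ) : 0 ≤ opNorm A :=
  opNorm_eq_norm A ▸ norm_nonneg A

theorem opNorm_transpose (A : Matrix (Fin m) (Fin n) ℝ) : opNorm Aᵀ = opNorm A := by
  rw [opNorm_eq_norm, opNorm_eq_norm, ← conjTranspose_eq_transpose_of_trivial,
    l2_opNorm_conjTranspose]

theorem norm_mulVec_le_opNorm (A : Matrix (Fin m) (Fin n) ℝ) (v : Fin n → ℝ) :
    ‖WithLp.toLp 2 (A *ᵥ v)‖ ≤ opNorm A * ‖WithLp.toLp 2 v‖ := by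
  rw [opNorm_eq_norm]
  exact l2_opNorm_mulVec A (WithLp.toLp 2 v)

theorem norm_vecMul_le_opNorm (v : Fin m → ℝ) (A : Matrix (Fin m) (Fin n) ℝ) :
    ‖WithLp.toLp 2 (v ᵥ* A)‖ ≤ ‖WithLp.toLp 2 v‖ * opNorm A := by
  rw [← mulVec_transpose, mul_comm, ← opNorm_transpose]
  exact norm_mulVec_le_opNorm Aᵀ v

end L2OpNorm

section Frobenius

open scoped Matrix.Norms.Frobenius

variable {l m n : ℕ}

theorem frobNorm_eq_norm (A : Matrix (Fin m) (Fin n) ℝ) : frobNorm A = ‖A‖ := by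
  rw [frobenius_norm_def, frobNorm, Real.sqrt_eq_rpow]
  simp

theorem frobNorm_nonneg (A : Matrix (Fin m) (Fin n) ℝ) : 0 ≤ frobNorm A :=
  Real.sqrt_nonneg _

theorem frobNorm_mul_le (A : Matrix (Fin l) (Fin m) ℝ) (B : Matrix (Fin m) (Fin n) ℝ) :
    frobNorm (A * B) ≤ frobNorm A * frobNorm B := by
  simpa only [frobNorm_eq_norm] using frobenius_norm_mul A B

theorem norm_vecMul_le_frobNorm (v : Fin m → ℝ) (A : Matrix (Fin m) (Fin n) ℝ) :
    ‖WithLp.toLp 2 (v ᵥ* A)‖ ≤ ‖WithLp.toLp 2 v‖ * frobNorm A := by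
  rw [frobNorm_eq_norm, ← frobenius_norm_replicateRow (ι := Fin 1),
    ← frobenius_norm_replicateRow (ι := Fin 1), replicateRow_vecMul]
  exact frobenius_norm_mul _ _

theorem frobNorm_sq (A : Matrix (Fin m) (Fin n) ℝ) :
    frobNorm A ^ 2 = ∑ i, ‖WithLp.toLp 2 (A i)‖ ^ 2 := by
  simp only [frobNorm, norm_toLp_eq_sqrt]
  rw [Real.sq_sqrt (by positivity)]
  exact sum_congr rfl fun i _ => (Real.sq_sqrt (by positivity)).symm

theorem frobNorm_mul_le_mul_opNorm (A : Matrix (Fin l) (Fin m) ℝ) (B : Matrix (Fin m) (Fin n) ℝ) :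
    frobNorm (A * B) ≤ frobNorm A * opNorm B := by
  refine le_of_pow_le_pow_left₀ two_ne_zero
    (mul_nonneg (frobNorm_nonneg A) (opNorm_nonneg B)) ?_
  rw [mul_pow, frobNorm_sq, frobNorm_sq, sum_mul]
  gcongr with i
  rw [← mul_pow]
  exact pow_le_pow_left₀ (norm_nonneg _) (norm_vecMul_le_opNorm (A i) B) 2

theorem frobNorm_map_le {σ : ℝ → ℝ} (hσ : ∀ x, |σ x| ≤ |x|) (A : Matrix (Fin m) (Fin n) ℝ) :
    frobNorm (A.map σ) ≤ frobNorm A := by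
  refine Real.sqrt_le_sqrt (sum_le_sum fun i _ => sum_le_sum fun j _ => ?_)
  simpa only [map_apply, sq_abs] using pow_le_pow_left₀ (abs_nonneg _) (hσ (A i j)) 2

end Frobenius

theorem Matrix.IsHermitian.mul_dotProduct_self_le_dotProduct_mulVec {n : Type*} [Fintype n]
    [DecidableEq n] {H : Matrix n n ℝ} (hH : H.IsHermitian) {c : ℝ} (hc : ∀ i, c ≤ hH.eigenvalues i)
    (x : n → ℝ) : c * (x ⬝ᵥ x) ≤ x ⬝ᵥ (H *ᵥ x) := by
  have hdiag : diagonal (fun i => hH.eigenvalues i - c) =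
      diagonal (RCLike.ofReal ∘ hH.eigenvalues) - c • 1 := by
    ext i j
    by_cases h : i = j <;> simp [diagonal, h]
  have hpsd : (H - c • 1).PosSemidef := by
    rw [hH.spectral_theorem, ← map_one (Unitary.conjStarAlgAut ℝ _ hH.eigenvectorUnitary),
      ← map_smul, ← map_sub, ← hdiag, Unitary.conjStarAlgAut_apply]
    exact (posSemidef_diagonal_iff.mpr fun i => sub_nonneg.mpr (hc i)).mul_mul_conjTranspose_same _
  simpa [sub_mulVec, dotProduct_sub, smul_mulVec, dotProduct_smul] using
    hpsd.dotProduct_mulVec_nonneg x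

theorem Matrix.map_eigenvalues_transpose_mul_self {m n : Type*} [Fintype m] [Fintype n]
    [DecidableEq m] [DecidableEq n] (A : Matrix m n ℝ)
    (hmn : Fintype.card m ≤ Fintype.card n) (hB : (Aᵀ * A).IsHermitian)
    (hC : (A * Aᵀ).IsHermitian) :
    univ.val.map hB.eigenvalues =
      Multiset.replicate (Fintype.card n - Fintype.card m) 0 + univ.val.map hC.eigenvalues := by
  have h := congrArg Polynomial.roots (charpoly_mul_comm_of_le Aᵀ A hmn)
  rw [hB.roots_charpoly_eq_eigenvalues, Polynomial.roots_mul, Polynomial.roots_X_pow,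
    hC.roots_charpoly_eq_eigenvalues] at h
  · simpa [Multiset.nsmul_singleton] using h
  · exact mul_ne_zero (pow_ne_zero _ Polynomial.X_ne_zero) (charpoly_monic _).ne_zero

theorem Tuple.comp_sort_le_iff_lt_countP {n : ℕ} {α : Type*} [LinearOrder α] (f : Fin n → α)
    (k : Fin n) (t : α) :
    f (Tuple.sort f k) ≤ t ↔ (k : ℕ) < (univ.val.map f).countP (· ≤ t) := by
  have hcount : (univ.val.map f).countP (· ≤ t) = #{j | f (Tuple.sort f j) ≤ t} := by
    rw [← Multiset.map_univ_val_equiv (Tuple.sort f), Multiset.map_map, Multiset.countP_map]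
    rfl
  have hmono := Tuple.monotone_sort f
  rw [hcount]
  constructor
  · intro hk
    calc (k : ℕ) < #(Iic k) := by simp
      _ ≤ _ := card_le_card fun j hj => by
        simpa using (hmono (mem_Iic.mp hj)).trans hk
  · intro hk
    by_contra! hlt
    have hsub : ({j | f (Tuple.sort f j) ≤ t} : Finset (Fin n)) ⊆ Iio k := fun j hj => by
      rw [mem_filter] at hj
      exact mem_Iio.mpr (lt_of_not_ge fun hkj => (hlt.trans_le (hmono hkj)).not_ge hj.2)
    simpa using hk.trans_le (card_le_card hsub)

section SingularValues

variable {m n : ℕ}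

theorem sval_nonneg (A : Matrix (Fin m) (Fin n) ℝ) (k : ℕ) : 0 ≤ sval A k := by
  unfold sval
  split
  · exact Real.sqrt_nonneg _
  · exact le_rfl

theorem sval_eq_zero_of_lt (A : Matrix (Fin m) (Fin n) ℝ) {k : ℕ} (hk : n < k) : sval A k = 0 :=
  dif_neg (by omega)

theorem sval_of_zero_rows (A : Matrix (Fin 0) (Fin n) ℝ) (k : ℕ) : sval A k = 0 := by
  have h : (isHermitian_transpose_mul_self A).eigenvalues = 0 :=
    (isHermitian_transpose_mul_self A).eigenvalues_eq_zero_iff.mpr (by ext; simp [mul_apply])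
  unfold sval
  split
  · rw [svals, h]
    simp
  · rfl

theorem posSemidef_self_mul_transpose (A : Matrix (Fin m) (Fin n) ℝ) : (A * Aᵀ).PosSemidef := by
  simpa using posSemidef_self_mul_conjTranspose A

theorem norm_vecMul_sq (v : Fin m → ℝ) (A : Matrix (Fin m) (Fin n) ℝ) :
    ‖WithLp.toLp 2 (v ᵥ* A)‖ ^ 2 = v ⬝ᵥ ((A * Aᵀ) *ᵥ v) := by
  rw [norm_toLp_sq, ← dotProduct_mulVec, ← mulVec_mulVec, mulVec_transpose]

theorem sq_sval_eq_min_eigenvalue (A : Matrix (Fin m) (Fin n) ℝ) (hmn : m ≤ n)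
    {i₀ : Fin m} (hi₀ : ∀ i, (posSemidef_self_mul_transpose A).1.eigenvalues i₀ ≤
      (posSemidef_self_mul_transpose A).1.eigenvalues i) :
    sval A m ^ 2 = (posSemidef_self_mul_transpose A).1.eigenvalues i₀ := by
  have hC := posSemidef_self_mul_transpose A
  set μ := (isHermitian_transpose_mul_self A).eigenvalues
  set ν := hC.1.eigenvalues
  have hm : 0 < m := i₀.pos
  set k : Fin n := ⟨n - m, by omega⟩
  have hsval : sval A m = √(μ (Tuple.sort μ k)) := by
    have hk : (⟨m - 1, by omega⟩ : Fin n).rev = k := Fin.ext (by simp only [Fin.val_rev, k]; omega)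
    rw [sval, dif_pos (by omega), svals, hk]
  have hcount : ∀ t, μ (Tuple.sort μ k) ≤ t ↔ n - m <
      (Multiset.replicate (n - m) 0).countP (· ≤ t) + (univ.val.map ν).countP (· ≤ t) := by
    intro t
    rw [Tuple.comp_sort_le_iff_lt_countP, map_eigenvalues_transpose_mul_self A (by simpa) _ hC.1,
      Multiset.countP_add, Fintype.card_fin, Fintype.card_fin]
  have hle : μ (Tuple.sort μ k) ≤ ν i₀ := by
    refine (hcount _).mpr ?_
    rw [(Multiset.countP_eq_card (s := .replicate (n - m) 0)).mpr
      fun a ha => (Multiset.eq_of_mem_replicate ha).symm ▸ hC.eigenvalues_nonneg i₀,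
      Multiset.card_replicate]
    exact Nat.lt_add_of_pos_right (Multiset.countP_pos.mpr ⟨ν i₀, by simp, le_rfl⟩)
  have hge : ν i₀ ≤ μ (Tuple.sort μ k) := by
    by_contra! hlt
    have h := (hcount _).mp le_rfl
    rw [(Multiset.countP_eq_zero (s := univ.val.map ν)).mpr
      (by simpa using fun i => hlt.trans_le (hi₀ i))] at h
    have := Multiset.countP_le_card (· ≤ μ (Tuple.sort μ k)) (Multiset.replicate (n - m) 0)
    simp only [Multiset.card_replicate] at this
    omega
  rw [hsval, Real.sq_sqrt ((hC.eigenvalues_nonneg i₀).trans hge), le_antisymm hle hge]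

theorem sval_mul_norm_le_norm_vecMul (A : Matrix (Fin m) (Fin n) ℝ) (w : Fin m → ℝ) :
    sval A m * ‖WithLp.toLp 2 w‖ ≤ ‖WithLp.toLp 2 (w ᵥ* A)‖ := by
  rcases Nat.eq_zero_or_pos m with rfl | hm
  · simp [sval_of_zero_rows]
  rcases lt_or_ge n m with hnm | hmn
  · simp [sval_eq_zero_of_lt A hnm]
  have hC := posSemidef_self_mul_transpose A
  obtain ⟨i₀, -, hi₀⟩ := exists_min_image univ hC.1.eigenvalues ⟨⟨0, hm⟩, mem_univ _⟩
  refine le_of_pow_le_pow_left₀ two_ne_zero (norm_nonneg _) ?_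
  rw [mul_pow, sq_sval_eq_min_eigenvalue A hmn fun i => hi₀ i (mem_univ i), norm_vecMul_sq,
    norm_toLp_sq]
  exact hC.1.mul_dotProduct_self_le_dotProduct_mulVec (fun i => hi₀ i (mem_univ i)) w

theorem exists_norm_vecMul_eq_sval (A : Matrix (Fin m) (Fin n) ℝ) (hm : 0 < m) (hmn : m ≤ n) :
    ∃ u : Fin m → ℝ, ‖WithLp.toLp 2 u‖ = 1 ∧ ‖WithLp.toLp 2 (u ᵥ* A)‖ = sval A m := by
  have hC := posSemidef_self_mul_transpose A
  obtain ⟨i₀, -, hi₀⟩ := exists_min_image univ hC.1.eigenvalues ⟨⟨0, hm⟩, mem_univ _⟩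
  set u := hC.1.eigenvectorBasis i₀
  have hu : ‖u‖ = 1 := hC.1.eigenvectorBasis.norm_eq_one i₀
  refine ⟨u.ofLp, hu, (sq_eq_sq₀ (norm_nonneg _) (sval_nonneg A m)).mp ?_⟩
  rw [sq_sval_eq_min_eigenvalue A hmn fun i => hi₀ i (mem_univ i), norm_vecMul_sq,
    hC.1.mulVec_eigenvectorBasis, dotProduct_smul, ← norm_toLp_sq]
  simp [u, hu]

theorem sval_le_sval_mul_frobNorm_add {p N : ℕ} (Y : Matrix (Fin m) (Fin N) ℝ)
    (G : Matrix (Fin m) (Fin p) ℝ) (Z : Matrix (Fin p) (Fin N) ℝ) (hmp : m ≤ p) :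
    sval Y m ≤ sval G m * frobNorm Z + frobNorm (G * Z - Y) := by
  rcases Nat.eq_zero_or_pos m with rfl | hm
  · rw [sval_of_zero_rows]
    exact add_nonneg (mul_nonneg (sval_nonneg G 0) (frobNorm_nonneg Z)) (frobNorm_nonneg _)
  obtain ⟨u, hu, hGu⟩ := exists_norm_vecMul_eq_sval G hm hmp
  have hY : u ᵥ* Y = (u ᵥ* G) ᵥ* Z - u ᵥ* (G * Z - Y) := by
    rw [vecMul_sub, vecMul_vecMul, sub_sub_cancel]
  calc sval Y m = sval Y m * ‖WithLp.toLp 2 u‖ := by rw [hu, mul_one]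
    _ ≤ ‖WithLp.toLp 2 (u ᵥ* Y)‖ := sval_mul_norm_le_norm_vecMul Y u
    _ ≤ ‖WithLp.toLp 2 ((u ᵥ* G) ᵥ* Z)‖ + ‖WithLp.toLp 2 (u ᵥ* (G * Z - Y))‖ := by
      rw [hY, WithLp.toLp_sub]
      exact norm_sub_le _ _
    _ ≤ sval G m * frobNorm Z + 1 * frobNorm (G * Z - Y) := by
      rw [← hGu, ← hu]
      exact add_le_add (norm_vecMul_le_frobNorm _ Z) (norm_vecMul_le_frobNorm u _)
    _ = sval G m * frobNorm Z + frobNorm (G * Z - Y) := by rw [one_mul]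

end SingularValues

theorem Real.card_mul_prod_rpow_le_sum_sq {ι : Type*} (s : Finset ι) (hs : s.Nonempty)
    (a : ι → ℝ) (ha : ∀ i ∈ s, 0 ≤ a i) :
    (#s : ℝ) * (∏ i ∈ s, a i) ^ ((2 : ℝ) / #s) ≤ ∑ i ∈ s, a i ^ 2 := by
  have hk : (0 : ℝ) < #s := by exact_mod_cast hs.card_pos
  have hamgm := Real.geom_mean_le_arith_mean s (fun _ => 1) (fun i => a i ^ 2)
    (fun _ _ => zero_le_one) (by simpa using hk) (fun i _ => sq_nonneg (a i))
  simp only [Real.rpow_one, sum_const, nsmul_eq_mul, mul_one, one_mul, prod_pow] at hamgm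
  rw [← Real.rpow_natCast, ← Real.rpow_mul (prod_nonneg ha), Nat.cast_ofNat, ← div_eq_mul_inv,
    le_div_iff₀' hk] at hamgm
  exact hamgm

section Network

variable {n : ℕ → ℕ} {N : ℕ} (W : ∀ ℓ : ℕ, Matrix (Fin (n ℓ)) (Fin (n (ℓ - 1))) ℝ)
  (Z : ∀ ℓ : ℕ, Matrix (Fin (n ℓ)) (Fin N) ℝ)

theorem frobNorm_le_prod_mul_opNorm {L1 : ℕ} {σ : ℝ → ℝ} (hσ : ∀ x, |σ x| ≤ |x|)
    (hZ : ∀ ℓ, 1 ≤ ℓ → ℓ ≤ L1 → Z ℓ = (W ℓ * Z (ℓ - 1)).map σ) {ℓ : ℕ} (h1 : 1 ≤ ℓ)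
    (h2 : ℓ ≤ L1) : frobNorm (Z ℓ) ≤ (∏ i ∈ Icc 1 ℓ, frobNorm (W i)) * opNorm (Z 0) := by
  induction ℓ, h1 using Nat.le_induction with
  | base =>
    rw [hZ 1 le_rfl h2, Icc_self, prod_singleton]
    exact (frobNorm_map_le hσ _).trans (frobNorm_mul_le_mul_opNorm _ _)
  | succ ℓ hℓ ih =>
    rw [hZ (ℓ + 1) (by omega) h2, prod_Icc_succ_top (by omega)]
    calc frobNorm ((W (ℓ + 1) * Z (ℓ + 1 - 1)).map σ)
        ≤ frobNorm (W (ℓ + 1)) * frobNorm (Z (ℓ + 1 - 1)) :=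
          (frobNorm_map_le hσ _).trans (frobNorm_mul_le _ _)
      _ ≤ frobNorm (W (ℓ + 1)) * ((∏ i ∈ Icc 1 ℓ, frobNorm (W i)) * opNorm (Z 0)) :=
          mul_le_mul_of_nonneg_left (ih (by omega)) (frobNorm_nonneg _)
      _ = _ := by ring

theorem mul_eq_of_linear_layers {L1 L : ℕ} (G : ∀ ℓ : ℕ, Matrix (Fin (n L)) (Fin (n ℓ)) ℝ)
    (hZ : ∀ ℓ, L1 + 1 ≤ ℓ → ℓ ≤ L → Z ℓ = W ℓ * Z (ℓ - 1))
    (hG : ∀ ℓ, L1 ≤ ℓ → ℓ < L → G ℓ = G (ℓ + 1) * W (ℓ + 1)) {ℓ : ℕ} (h1 : L1 ≤ ℓ)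
    (h2 : ℓ ≤ L) : G ℓ * Z ℓ = G L1 * Z L1 := by
  induction ℓ, h1 using Nat.le_induction with
  | base => rfl
  | succ ℓ hℓ ih =>
    rw [hZ (ℓ + 1) (by omega) h2, ← Matrix.mul_assoc, ← hG ℓ hℓ (by omega)]
    exact ih (by omega)

end Network

theorem statement13_general
    (L1 L2 L : ℕ) (hL1 : 1 ≤ L1) (hLdef : L = L1 + L2)
    (n : ℕ → ℕ) (N K : ℕ) (hK : n L = K)
    (σ : ℝ → ℝ)
    (hσ : ∀ x : ℝ, |σ x| ≤ |x|)
    (W : ∀ ℓ : ℕ, Matrix (Fin (n ℓ)) (Fin (n (ℓ - 1))) ℝ)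
    (X : Matrix (Fin (n 0)) (Fin N) ℝ)
    (Y : Matrix (Fin (n L)) (Fin N) ℝ)
    (Z : ∀ ℓ : ℕ, Matrix (Fin (n ℓ)) (Fin N) ℝ)
    (hZ0 : Z 0 = X)
    (hZnl : ∀ ℓ, 1 ≤ ℓ → ℓ ≤ L1 → Z ℓ = (W ℓ * Z (ℓ - 1)).map σ)
    (hZlin : ∀ ℓ, L1 + 1 ≤ ℓ → ℓ ≤ L → Z ℓ = W ℓ * Z (ℓ - 1))
    -- partial products of the linear head: G ℓ = W_L ⋯ W_{ℓ+1}
    (G : ∀ ℓ : ℕ, Matrix (Fin (n L)) (Fin (n ℓ)) ℝ)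
    (hGL : G L = 1)
    (hGrec : ∀ ℓ, L1 ≤ ℓ → ℓ < L → G ℓ = G (ℓ + 1) * W (ℓ + 1))
    (ε1 : ℝ)
    (hA1 : frobNorm (Z L - Y) ≤ ε1)
    (hε1 : ε1 < sval Y K)
    (hGK : 0 < sval (G L1) K) :
    (L1 : ℝ) * ((sval Y K - ε1) / (sval (G L1) K * opNorm X)) ^ ((2 : ℝ) / (L1 : ℝ)) ≤
      ∑ ℓ ∈ Finset.Icc 1 L1, frobNorm (W ℓ) ^ 2 := by
  subst hK hZ0
  have hZL : Z L = G L1 * Z L1 := by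
    simpa [hGL] using mul_eq_of_linear_layers W Z G hZlin hGrec (by omega) le_rfl
  have hKL1 : n L ≤ n L1 := not_lt.mp fun h => hGK.ne' (sval_eq_zero_of_lt _ h)
  have hperturb := sval_le_sval_mul_frobNorm_add Y (G L1) (Z L1) hKL1
  rw [← hZL] at hperturb
  have hZnorm := frobNorm_le_prod_mul_opNorm W Z hσ hZnl hL1 le_rfl
  have hden : 0 ≤ sval (G L1) (n L) * opNorm (Z 0) := mul_nonneg hGK.le (opNorm_nonneg _)
  have hratio : (sval Y (n L) - ε1) / (sval (G L1) (n L) * opNorm (Z 0)) ≤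
      ∏ ℓ ∈ Icc 1 L1, frobNorm (W ℓ) := by
    refine div_le_of_le_mul₀ hden (prod_nonneg fun ℓ _ => frobNorm_nonneg _) ?_
    calc sval Y (n L) - ε1 ≤ sval (G L1) (n L) * frobNorm (Z L1) := by linarith
      _ ≤ sval (G L1) (n L) * ((∏ ℓ ∈ Icc 1 L1, frobNorm (W ℓ)) * opNorm (Z 0)) := by gcongr
      _ = _ := by ring
  calc (L1 : ℝ) * ((sval Y (n L) - ε1) / (sval (G L1) (n L) * opNorm (Z 0))) ^ ((2 : ℝ) / L1)
      ≤ (L1 : ℝ) * (∏ ℓ ∈ Icc 1 L1, frobNorm (W ℓ)) ^ ((2 : ℝ) / L1) := by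
        have hratio_nonneg := div_nonneg (sub_nonneg.mpr hε1.le) hden
        exact mul_le_mul_of_nonneg_left (Real.rpow_le_rpow hratio_nonneg hratio (by positivity))
          (Nat.cast_nonneg _)
    _ ≤ ∑ ℓ ∈ Icc 1 L1, frobNorm (W ℓ) ^ 2 := by
        simpa using Real.card_mul_prod_rpow_le_sum_sq (Icc 1 L1) (nonempty_Icc.mpr hL1) _
          fun ℓ _ => frobNorm_nonneg (W ℓ)

/-- lower bound on the parameter norm of the nonlinear part in terms of the
smallest singular value of the product of the linear layers. -/
theorem statement13
    (L1 L2 L : ℕ) (hL1 : 1 ≤ L1) (hL2 : 1 ≤ L2) (hLdef : L = L1 + L2)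
    (n : ℕ → ℕ) (N K : ℕ) (hK : n L = K)
    (σ : ℝ → ℝ)
    (hσ : ∀ x : ℝ, |σ x| ≤ |x|)
    (W : ∀ ℓ : ℕ, Matrix (Fin (n ℓ)) (Fin (n (ℓ - 1))) ℝ)
    (X : Matrix (Fin (n 0)) (Fin N) ℝ)
    (hX : 0 < opNorm X)
    (Y : Matrix (Fin (n L)) (Fin N) ℝ)
    (Z : ∀ ℓ : ℕ, Matrix (Fin (n ℓ)) (Fin N) ℝ)
    (hZ0 : Z 0 = X)
    (hZnl : ∀ ℓ, 1 ≤ ℓ → ℓ ≤ L1 → Z ℓ = (W ℓ * Z (ℓ - 1)).map σ)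
    (hZlin : ∀ ℓ, L1 + 1 ≤ ℓ → ℓ ≤ L → Z ℓ = W ℓ * Z (ℓ - 1))
    -- partial products of the linear head: G ℓ = W_L ⋯ W_{ℓ+1}
    (G : ∀ ℓ : ℕ, Matrix (Fin (n L)) (Fin (n ℓ)) ℝ)
    (hGL : G L = 1)
    (hGrec : ∀ ℓ, L1 ≤ ℓ → ℓ < L → G ℓ = G (ℓ + 1) * W (ℓ + 1))
    (ε1 : ℝ)
    (hA1 : frobNorm (Z L - Y) ≤ ε1)
    (hε1 : ε1 < sval Y K)
    (hGK : 0 < sval (G L1) K) :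
    (L1 : ℝ) * ((sval Y K - ε1) / (sval (G L1) K * opNorm X)) ^ ((2 : ℝ) / (L1 : ℝ)) ≤
      ∑ ℓ ∈ Finset.Icc 1 L1, frobNorm (W ℓ) ^ 2 :=
  statement13_general L1 L2 L hL1 hLdef n N K hK σ hσ W X Y Z hZ0 hZnl hZlin G hGL hGrec ε1 hA1 hε1
    hGK
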